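/- If C_M ⊆ GF(2)^n is a t-mineral-error-correcting code, and C ⊆ GF(2)^{n+1} is the set of all vectors obtained by prepending an arbitrary bit to a codeword of C_M, then C is a t-grain-error-correcting code of size 2|C_M|. -/

import Mathlib

/-- `e` is a `t`-grain-error for `x`: weight at most `t`, `e₁ = 0`, and an error at
position `i` (2 ≤ i ≤ n) requires `x_i ≠ x_{i-1}`. (0-indexed here.) -/
def grainError {n : ℕ} (t : ℕ) (x e : Fin n → ZMod 2) : Prop :=
  (Finset.univ.filter fun i => e i ≠ 0).card ≤ t ∧
  (∀ i : Fin n, (i : ℕ) = 0 → e i = 0) ∧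
  (∀ i : Fin n, 0 < (i : ℕ) → e i ≠ 0 →
    x i ≠ x ⟨(i : ℕ) - 1, lt_of_le_of_lt (Nat.sub_le _ _) i.isLt⟩)

/-- The grain error-ball `B_{t,G}(x)`. -/
def grainBall {n : ℕ} (t : ℕ) (x : Fin n → ZMod 2) : Set (Fin n → ZMod 2) :=
  {y | ∃ e, grainError t x e ∧ y = x + e}

/-- The number of runs of a binary vector. -/
def runs {n : ℕ} (x : Fin n → ZMod 2) : ℕ :=
  (if n = 0 then 0 else 1) +
  (Finset.univ.filter fun i : Fin n =>
    0 < (i : ℕ) ∧ x i ≠ x ⟨(i : ℕ) - 1, lt_of_le_of_lt (Nat.sub_le _ _) i.isLt⟩).card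

/-- `e` is a `t`-mineral-error for `x`: same as a grain-error but without the
requirement `e₁ = 0`. -/
def mineralError {n : ℕ} (t : ℕ) (x e : Fin n → ZMod 2) : Prop :=
  (Finset.univ.filter fun i => e i ≠ 0).card ≤ t ∧
  (∀ i : Fin n, 0 < (i : ℕ) → e i ≠ 0 →
    x i ≠ x ⟨(i : ℕ) - 1, lt_of_le_of_lt (Nat.sub_le _ _) i.isLt⟩)

/-- The mineral error-ball `B_{t,M}(x)`. -/
def mineralBall {n : ℕ} (t : ℕ) (x : Fin n → ZMod 2) : Set (Fin n → ZMod 2) :=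
  {y | ∃ e, mineralError t x e ∧ y = x + e}

def grainCorrecting {n : ℕ} (t : ℕ) (C : Finset (Fin n → ZMod 2)) : Prop :=
  ∀ x ∈ C, ∀ y ∈ C, x ≠ y → Disjoint (grainBall t x) (grainBall t y)

def mineralCorrecting {n : ℕ} (t : ℕ) (C : Finset (Fin n → ZMod 2)) : Prop :=
  ∀ x ∈ C, ∀ y ∈ C, x ≠ y → Disjoint (mineralBall t x) (mineralBall t y)

/-!
A grain error never touches the first bit and, after dropping that bit, is a mineral error for
the tail. So two grain balls around codewords of the extended code can only meet if the codewords
agree in the first bit, and then their tails have intersecting mineral balls.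
-/

open Finset

lemma grainError.tail {n t : ℕ} {x e : Fin (n + 1) → ZMod 2} (h : grainError t x e) :
    mineralError t (Fin.tail x) (Fin.tail e) := by
  obtain ⟨hweight, -, hadj⟩ := h
  refine ⟨le_trans ?_ hweight, fun i hi he => ?_⟩
  · exact card_le_card_of_injOn Fin.succ (fun i hi => by simpa [Fin.tail] using mem_filter.mp hi)
      (Fin.succ_injective _).injOn
  · have hpred : (⟨(i : ℕ) - 1, by omega⟩ : Fin n).succ = ⟨(i.succ : ℕ) - 1, by omega⟩ :=
      Fin.ext (by simp only [Fin.val_succ]; omega)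
    simpa [Fin.tail, hpred] using hadj i.succ i.succ_pos he

lemma tail_mem_mineralBall_of_mem_grainBall {n t : ℕ} {x z : Fin (n + 1) → ZMod 2}
    (hz : z ∈ grainBall t x) : Fin.tail z ∈ mineralBall t (Fin.tail x) := by
  obtain ⟨e, he, rfl⟩ := hz
  exact ⟨Fin.tail e, he.tail, rfl⟩

lemma apply_zero_eq_of_mem_grainBall {n t : ℕ} {x z : Fin (n + 1) → ZMod 2}
    (hz : z ∈ grainBall t x) : z 0 = x 0 := by
  obtain ⟨e, he, rfl⟩ := hz
  simp [he.2.1 0 rfl]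

theorem grainCorrecting_filter_tail_mem {n t : ℕ} {C : Finset (Fin n → ZMod 2)}
    (hC : mineralCorrecting t C) :
    grainCorrecting t (univ.filter fun x : Fin (n + 1) → ZMod 2 => Fin.tail x ∈ C) := by
  intro x hx y hy hxy
  simp only [mem_filter, mem_univ, true_and] at hx hy
  rw [Set.disjoint_left]
  intro z hzx hzy
  have hhead : x 0 = y 0 := by
    rw [← apply_zero_eq_of_mem_grainBall hzx, apply_zero_eq_of_mem_grainBall hzy]
  have htail : Fin.tail x ≠ Fin.tail y := fun htail =>
    hxy (by rw [← Fin.cons_self_tail x, ← Fin.cons_self_tail y, hhead, htail])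
  exact Set.disjoint_left.mp (hC _ hx _ hy htail)
    (tail_mem_mineralBall_of_mem_grainBall hzx) (tail_mem_mineralBall_of_mem_grainBall hzy)

theorem card_filter_tail_mem {α : Type*} [Fintype α] [DecidableEq α] {n : ℕ}
    (C : Finset (Fin n → α)) :
    #(univ.filter fun x : Fin (n + 1) → α => Fin.tail x ∈ C) = Fintype.card α * #C := by
  rw [← card_univ, ← card_product]
  exact card_equiv (Fin.consEquiv fun _ => α).symm (by simp [Fin.consEquiv])

theorem stmt4 {n t : ℕ} (CM : Finset (Fin n → ZMod 2)) (h : mineralCorrecting t CM) :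
    grainCorrecting t (Finset.univ.filter fun x : Fin (n + 1) → ZMod 2 =>
        (fun i : Fin n => x i.succ) ∈ CM) ∧
    (Finset.univ.filter fun x : Fin (n + 1) → ZMod 2 =>
        (fun i : Fin n => x i.succ) ∈ CM).card = 2 * CM.card :=
  ⟨grainCorrecting_filter_tail_mem h, (card_filter_tail_mem CM).trans (by rw [ZMod.card])⟩
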